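/- Let G = C(n; a_1,b_1; a_2,b_2) be a 2-paired circulant with n = lcm(a_1·b_1, a_2·b_2). Then every inclusion-maximal clique of G that is an a_1-clique has size exactly b_1·b_2·gcd(a_2, a_1·b_1)/gcd(a_1·b_1, a_2·b_2), and every inclusion-maximal clique of G that is an a_2-clique has size exactly b_1·b_2·gcd(a_1, a_2·b_2)/gcd(a_1·b_1, a_2·b_2). -/

import Mathlib

open SimpleGraph Finset

/-- The circulant graph `C_n(D)` on vertex set `ZMod n` with distance set
`D ⊆ {1, …, n-1}`: distinct vertices `i, j` are adjacent iff `(i - j) mod n ∈ D`. -/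
def circulant (n : ℕ) (D : Finset ℕ) : SimpleGraph (ZMod n) :=
  SimpleGraph.fromRel (fun i j => (i - j).val ∈ D)

/-- A graph is a CIS graph if every maximal clique and every maximal stable set
(equivalently, every maximal clique of the complement) intersect. -/
def SimpleGraph.IsCIS {V : Type*} (G : SimpleGraph V) : Prop :=
  ∀ C S : Set V, Maximal G.IsClique C → Maximal Gᶜ.IsClique S → (C ∩ S).Nonempty

/-- The distance set `{d ∈ {1,…,n-1} : a ∣ d ∧ a*b ∤ d}` of a pair `(a, b)`. -/
def pairedD (n a b : ℕ) : Finset ℕ :=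
  (Finset.Icc 1 (n - 1)).filter (fun d => a ∣ d ∧ ¬ (a * b) ∣ d)

/-- The `k`-paired circulant `C(n; a_1,b_1; …; a_k,b_k)` (index type `ι`). -/
def pairedCirculant (n : ℕ) {ι : Type*} [Fintype ι] (a b : ι → ℕ) : SimpleGraph (ZMod n) :=
  circulant n (Finset.univ.biUnion (fun i => pairedD n (a i) (b i)))

/-- The lexicographic product of two simple graphs. -/
def lexProd {α β : Type*} (G : SimpleGraph α) (H : SimpleGraph β) : SimpleGraph (α × β) where
  Adj p q := G.Adj p.1 q.1 ∨ (p.1 = q.1 ∧ H.Adj p.2 q.2)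
  symm := by
    constructor
    intro p q h
    rcases h with h | ⟨h1, h2⟩
    · exact Or.inl h.symm
    · exact Or.inr ⟨h1.symm, h2.symm⟩
  loopless := by
    constructor
    intro p h
    rcases h with h | ⟨_, h⟩
    · exact G.irrefl h
    · exact H.irrefl h

/-!
Inside one residue class modulo `a₁`, distinct vertices with different residues modulo `a₁b₁`
are always adjacent, and distinct vertices with the same residue modulo `a₁b₁` are adjacent
exactly when they also agree modulo `a₂`: they cannot agree modulo `a₂b₂` as well, because
`n = lcm(a₁b₁, a₂b₂)`. Hence a maximal `a₁`-clique meets every one of the `b₁` residues modulo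
`a₁b₁` of its class, and meets each of them in a full residue class modulo `lcm(a₁b₁, a₂)`, of
size `n / lcm(a₁b₁, a₂)`. The formula of the theorem is `b₁ · n / lcm(a₁b₁, a₂)` rewritten with
`gcd · lcm = product`; the `a₂`-cliques are the same case with the two pairs exchanged.
-/

namespace ZMod

theorem cast_eq_cast_iff_dvd_val_sub {n k : ℕ} [NeZero n] (h : k ∣ n) (i j : ZMod n) :
    (i.cast : ZMod k) = j.cast ↔ k ∣ (i - j).val := by
  rw [← sub_eq_zero, ← cast_sub h, cast_eq_val, natCast_eq_zero_iff]

theorem cast_eq_cast_lcm_iff {n k l : ℕ} [NeZero n] (h : Nat.lcm k l ∣ n) (i j : ZMod n) :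
    (i.cast : ZMod (Nat.lcm k l)) = j.cast ↔
      (i.cast : ZMod k) = j.cast ∧ (i.cast : ZMod l) = j.cast := by
  rw [cast_eq_cast_iff_dvd_val_sub h,
    cast_eq_cast_iff_dvd_val_sub (dvd_trans (Nat.dvd_lcm_left k l) h),
    cast_eq_cast_iff_dvd_val_sub (dvd_trans (Nat.dvd_lcm_right k l) h), Nat.lcm_dvd_iff]

theorem card_filter_cast_eq {m k : ℕ} [NeZero m] (h : k ∣ m) (c : ZMod k) :
    #{x : ZMod m | (x.cast : ZMod k) = c} = m / k := by
  have : NeZero k := ⟨ne_zero_of_dvd_ne_zero (NeZero.ne m) h⟩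
  have hfiber (c' : ZMod k) :
      #{x : ZMod m | (x.cast : ZMod k) = c'} = #{x : ZMod m | (x.cast : ZMod k) = c} := by
    convert AddMonoidHom.card_fiber_eq_of_mem_range (castHom h (ZMod k))
      (castHom_surjective h c') (castHom_surjective h c) <;> rfl
  have hsum := card_eq_sum_card_fiberwise (s := univ) (t := univ)
    (f := fun x : ZMod m => (x.cast : ZMod k)) fun _ _ => mem_univ _
  rw [sum_const_nat fun c' _ => hfiber c', card_univ, card_univ, ZMod.card, ZMod.card] at hsum
  exact (Nat.div_eq_of_eq_mul_right (Nat.pos_of_neZero k) hsum).symm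

theorem cast_cast_of_dvd {n m k : ℕ} (hkm : k ∣ m) (hmn : m ∣ n) (u : ZMod n) :
    ((u.cast : ZMod m).cast : ZMod k) = u.cast :=
  RingHom.congr_fun (castHom_comp hkm hmn) u

theorem cast_eq_cast_of_dvd {n m k : ℕ} (hkm : k ∣ m) (hmn : m ∣ n)
    {u v : ZMod n} (h : (u.cast : ZMod m) = v.cast) : (u.cast : ZMod k) = v.cast := by
  rw [← cast_cast_of_dvd hkm hmn, h, cast_cast_of_dvd hkm hmn]

theorem eq_of_cast_eq_of_cast_eq {n k l : ℕ} [NeZero n] (hn : n = Nat.lcm k l)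
    {u v : ZMod n} (hk : (u.cast : ZMod k) = v.cast) (hl : (u.cast : ZMod l) = v.cast) :
    u = v := by
  rw [cast_eq_cast_iff_dvd_val_sub (hn ▸ Nat.dvd_lcm_left k l)] at hk
  rw [cast_eq_cast_iff_dvd_val_sub (hn ▸ Nat.dvd_lcm_right k l)] at hl
  have hdvd := Nat.lcm_dvd hk hl
  rw [← hn] at hdvd
  rw [← sub_eq_zero, ← val_eq_zero]
  exact Nat.eq_zero_of_dvd_of_lt hdvd (val_lt _)

theorem cast_eq_cast_iff_modEq_val {n : ℕ} [NeZero n] (k : ℕ) (i j : ZMod n) :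
    (i.cast : ZMod k) = j.cast ↔ i.val ≡ j.val [MOD k] := by
  rw [cast_eq_val, cast_eq_val, natCast_eq_natCast_iff]

end ZMod

theorem SimpleGraph.mem_of_maximal_isClique {V : Type*} {G : SimpleGraph V} {C : Set V}
    (hC : Maximal G.IsClique C) {v : V} (hv : ∀ u ∈ C, v ≠ u → G.Adj v u) : v ∈ C :=
  hC.2 (hC.1.insert hv) (Set.subset_insert v C) (Set.mem_insert v C)

theorem val_sub_mem_pairedD_iff {n a b : ℕ} [NeZero n] (h : a * b ∣ n) {i j : ZMod n}
    (hij : i ≠ j) :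
    (i - j).val ∈ pairedD n a b ↔
      (i.cast : ZMod a) = j.cast ∧ (i.cast : ZMod (a * b)) ≠ j.cast := by
  have hpos : 1 ≤ (i - j).val :=
    Nat.one_le_iff_ne_zero.2 fun h0 => hij (sub_eq_zero.1 ((ZMod.val_eq_zero _).1 h0))
  have hlt : (i - j).val ≤ n - 1 := Nat.le_sub_one_of_lt (ZMod.val_lt _)
  simp only [pairedD, mem_filter, mem_Icc, hpos, hlt, true_and, ne_eq,
    ZMod.cast_eq_cast_iff_dvd_val_sub h,
    ZMod.cast_eq_cast_iff_dvd_val_sub (dvd_of_mul_right_dvd h)]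

theorem circulant_pairedD_union_adj_iff {n a1 b1 a2 b2 : ℕ} [NeZero n] (h1 : a1 * b1 ∣ n)
    (h2 : a2 * b2 ∣ n) (i j : ZMod n) :
    (circulant n (pairedD n a1 b1 ∪ pairedD n a2 b2)).Adj i j ↔ i ≠ j ∧
      (((i.cast : ZMod a1) = j.cast ∧ (i.cast : ZMod (a1 * b1)) ≠ j.cast) ∨
        ((i.cast : ZMod a2) = j.cast ∧ (i.cast : ZMod (a2 * b2)) ≠ j.cast)) := by
  rw [circulant, fromRel_adj, and_congr_right_iff]
  intro hij
  simp only [mem_union, val_sub_mem_pairedD_iff h1 hij, val_sub_mem_pairedD_iff h2 hij,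
    val_sub_mem_pairedD_iff h1 (Ne.symm hij), val_sub_mem_pairedD_iff h2 (Ne.symm hij),
    eq_comm (a := j.cast), ne_comm (a := j.cast), or_self]

section MaximalClique

variable {n a1 b1 a2 b2 : ℕ} [NeZero n] (hlcm : n = Nat.lcm (a1 * b1) (a2 * b2))
  {C : Set (ZMod n)} (hC : Maximal (circulant n (pairedD n a1 b1 ∪ pairedD n a2 b2)).IsClique C)
  (hmod : ∀ i ∈ C, ∀ j ∈ C, (i.cast : ZMod a1) = j.cast)
include hlcm

theorem adj_iff_of_cast_eq {u v : ZMod n} (huv : (u.cast : ZMod a1) = v.cast) :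
    (circulant n (pairedD n a1 b1 ∪ pairedD n a2 b2)).Adj u v ↔
      u ≠ v ∧ ((u.cast : ZMod (a1 * b1)) = v.cast → (u.cast : ZMod a2) = v.cast) := by
  have h1 : a1 * b1 ∣ n := hlcm ▸ Nat.dvd_lcm_left _ _
  have h2 : a2 * b2 ∣ n := hlcm ▸ Nat.dvd_lcm_right _ _
  rw [circulant_pairedD_union_adj_iff h1 h2, and_congr_right_iff]
  intro hne
  constructor
  · rintro (⟨-, hA1⟩ | ⟨ha2, -⟩) heq
    · exact absurd heq hA1
    · exact ha2
  · intro himp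
    by_cases heq : (u.cast : ZMod (a1 * b1)) = v.cast
    · exact Or.inr ⟨himp heq, fun hA2 => hne (ZMod.eq_of_cast_eq_of_cast_eq hlcm heq hA2)⟩
    · exact Or.inl ⟨huv, heq⟩

include hC hmod

theorem cast_eq_of_mem_of_cast_eq {u v : ZMod n} (hu : u ∈ C) (hv : v ∈ C)
    (huv : (u.cast : ZMod (a1 * b1)) = v.cast) : (u.cast : ZMod a2) = v.cast := by
  obtain rfl | hne := eq_or_ne u v
  · rfl
  · exact ((adj_iff_of_cast_eq hlcm (hmod u hu v hv)).1 (hC.1 hu hv hne)).2 huv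

theorem mem_and_cast_eq_iff_cast_lcm_eq {j : ZMod n} (hj : j ∈ C) (u : ZMod n) :
    u ∈ C ∧ (u.cast : ZMod (a1 * b1)) = j.cast ↔
      (u.cast : ZMod (Nat.lcm (a1 * b1) a2)) = j.cast := by
  have hA1 : a1 * b1 ∣ n := hlcm ▸ Nat.dvd_lcm_left _ _
  have ha2 : a2 ∣ n := dvd_trans (dvd_mul_right a2 b2) (hlcm ▸ Nat.dvd_lcm_right _ _)
  rw [ZMod.cast_eq_cast_lcm_iff (Nat.lcm_dvd hA1 ha2)]
  constructor
  · rintro ⟨hu, huj⟩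
    exact ⟨huj, cast_eq_of_mem_of_cast_eq hlcm hC hmod hu hj huj⟩
  · rintro ⟨huj, huj'⟩
    refine ⟨mem_of_maximal_isClique hC fun w hw hne => ?_, huj⟩
    have huw : (u.cast : ZMod a1) = w.cast :=
      (ZMod.cast_eq_cast_of_dvd (dvd_mul_right a1 b1) hA1 huj).trans (hmod j hj w hw)
    refine (adj_iff_of_cast_eq hlcm huw).2 ⟨hne, fun huw' => ?_⟩
    rw [huj', cast_eq_of_mem_of_cast_eq hlcm hC hmod hj hw (huj.symm.trans huw')]

theorem exists_mem_cast_eq {i : ZMod n} (hi : i ∈ C) (x : ZMod (a1 * b1))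
    (hx : (x.cast : ZMod a1) = i.cast) : ∃ j ∈ C, (j.cast : ZMod (a1 * b1)) = x := by
  have hA1 : a1 * b1 ∣ n := hlcm ▸ Nat.dvd_lcm_left _ _
  by_contra! hx'
  obtain ⟨v, rfl⟩ := ZMod.castHom_surjective hA1 x
  refine hx' v (mem_of_maximal_isClique hC fun w hw hne => ?_) rfl
  have hvw : (v.cast : ZMod a1) = w.cast :=
    (ZMod.cast_cast_of_dvd (dvd_mul_right a1 b1) hA1 v).symm.trans (hx.trans (hmod i hi w hw))
  exact (adj_iff_of_cast_eq hlcm hvw).2 ⟨hne, fun hvw' => absurd hvw'.symm (hx' w hw)⟩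

theorem ncard_eq_of_maximal_isClique :
    C.ncard = b1 * (n / Nat.lcm (a1 * b1) a2) := by
  classical
  have hA1 : a1 * b1 ∣ n := hlcm ▸ Nat.dvd_lcm_left _ _
  have ha2 : a2 ∣ n := dvd_trans (dvd_mul_right a2 b2) (hlcm ▸ Nat.dvd_lcm_right _ _)
  have : NeZero (a1 * b1) := ⟨ne_zero_of_dvd_ne_zero (NeZero.ne n) hA1⟩
  obtain ⟨i, hi⟩ : C.Nonempty := by
    by_contra! hempty
    simpa [hempty] using mem_of_maximal_isClique hC (v := 0) (by simp [hempty])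
  rw [Set.ncard_eq_toFinset_card', card_eq_sum_card_fiberwise
    (f := fun u => (u.cast : ZMod (a1 * b1)))
    (t := univ.filter fun x : ZMod (a1 * b1) => (x.cast : ZMod a1) = i.cast)]
  · rw [sum_const_nat, ZMod.card_filter_cast_eq (dvd_mul_right a1 b1),
      Nat.mul_div_cancel_left _ (Nat.pos_of_ne_zero (left_ne_zero_of_mul (NeZero.ne (a1 * b1))))]
    intro x hx
    obtain ⟨j, hj, rfl⟩ := exists_mem_cast_eq hlcm hC hmod hi x (mem_filter.1 hx).2
    rw [← ZMod.card_filter_cast_eq (Nat.lcm_dvd hA1 ha2) (j.cast)]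
    congr 1
    ext u
    simp only [mem_filter, Set.mem_toFinset, mem_univ, true_and,
      mem_and_cast_eq_iff_cast_lcm_eq hlcm hC hmod hj]
  · intro u hu
    simp only [coe_filter, mem_univ, true_and, Set.mem_ofPred_eq]
    rw [ZMod.cast_cast_of_dvd (dvd_mul_right a1 b1) hA1]
    exact hmod u (Set.mem_toFinset.1 hu) i hi

end MaximalClique

theorem mul_div_lcm_eq_mul_gcd_div_gcd {n a1 b1 a2 b2 : ℕ} [NeZero n]
    (hlcm : n = Nat.lcm (a1 * b1) (a2 * b2)) :
    b1 * (n / Nat.lcm (a1 * b1) a2) =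
      b1 * b2 * Nat.gcd a2 (a1 * b1) / Nat.gcd (a1 * b1) (a2 * b2) := by
  have hA1 : a1 * b1 ∣ n := hlcm ▸ Nat.dvd_lcm_left _ _
  have ha2 : a2 ∣ n := dvd_trans (dvd_mul_right a2 b2) (hlcm ▸ Nat.dvd_lcm_right _ _)
  have hl : Nat.lcm (a1 * b1) a2 ∣ n := Nat.lcm_dvd hA1 ha2
  have hl0 : Nat.lcm (a1 * b1) a2 ≠ 0 := ne_zero_of_dvd_ne_zero (NeZero.ne n) hl
  have hgcd0 : 0 < Nat.gcd (a1 * b1) (a2 * b2) :=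
    Nat.gcd_pos_of_pos_left _ (Nat.pos_of_ne_zero (ne_zero_of_dvd_ne_zero (NeZero.ne n) hA1))
  refine (Nat.div_eq_of_eq_mul_left hgcd0
    (Nat.eq_of_mul_eq_mul_right (Nat.pos_of_ne_zero hl0) ?_)).symm
  calc b1 * b2 * Nat.gcd a2 (a1 * b1) * Nat.lcm (a1 * b1) a2
      = b1 * b2 * (Nat.gcd a2 (a1 * b1) * Nat.lcm a2 (a1 * b1)) := by rw [Nat.lcm_comm]; ring
    _ = b1 * (Nat.gcd (a1 * b1) (a2 * b2) * Nat.lcm (a1 * b1) (a2 * b2)) := by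
      rw [Nat.gcd_mul_lcm, Nat.gcd_mul_lcm]; ring
    _ = b1 * (n / Nat.lcm (a1 * b1) a2) * Nat.gcd (a1 * b1) (a2 * b2) *
          Nat.lcm (a1 * b1) a2 := by
      rw [← hlcm]; nth_rw 1 [← Nat.div_mul_cancel hl]; ring

theorem stmt_12_general (n a1 b1 a2 b2 : ℕ) (hn : 0 < n)
    (hlcm : n = Nat.lcm (a1 * b1) (a2 * b2))
    (C : Set (ZMod n))
    (hC : Maximal (circulant n (pairedD n a1 b1 ∪ pairedD n a2 b2)).IsClique C) :
    ((∀ i ∈ C, ∀ j ∈ C, i.val ≡ j.val [MOD a1]) →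
      C.ncard = b1 * b2 * Nat.gcd a2 (a1 * b1) / Nat.gcd (a1 * b1) (a2 * b2)) ∧
    ((∀ i ∈ C, ∀ j ∈ C, i.val ≡ j.val [MOD a2]) →
      C.ncard = b1 * b2 * Nat.gcd a1 (a2 * b2) / Nat.gcd (a1 * b1) (a2 * b2)) := by
  have : NeZero n := ⟨hn.ne'⟩
  have hlcm' : n = Nat.lcm (a2 * b2) (a1 * b1) := hlcm.trans (Nat.lcm_comm _ _)
  refine ⟨fun hmod => ?_, fun hmod => ?_⟩
  · rw [ncard_eq_of_maximal_isClique hlcm hC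
      fun i hi j hj => (ZMod.cast_eq_cast_iff_modEq_val a1 i j).2 (hmod i hi j hj),
      mul_div_lcm_eq_mul_gcd_div_gcd hlcm]
  · rw [union_comm] at hC
    rw [ncard_eq_of_maximal_isClique hlcm' hC
      fun i hi j hj => (ZMod.cast_eq_cast_iff_modEq_val a2 i j).2 (hmod i hi j hj),
      mul_div_lcm_eq_mul_gcd_div_gcd hlcm', mul_comm b2 b1, Nat.gcd_comm (a2 * b2)]

/-- In a 2-paired circulant with `n = lcm(a₁b₁, a₂b₂)`, every maximal clique
that is an `a₁`-clique has size `b₁b₂ · gcd(a₂, a₁b₁) / gcd(a₁b₁, a₂b₂)`, and every maximal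
clique that is an `a₂`-clique has size `b₁b₂ · gcd(a₁, a₂b₂) / gcd(a₁b₁, a₂b₂)`. -/
theorem stmt_12 (n a1 b1 a2 b2 : ℕ) (hn : 0 < n)
    (ha1 : 0 < a1) (hb1 : 0 < b1) (ha2 : 0 < a2) (hb2 : 0 < b2)
    (h1 : a1 * b1 ∣ n) (h2 : a2 * b2 ∣ n)
    (hlcm : n = Nat.lcm (a1 * b1) (a2 * b2))
    (C : Set (ZMod n))
    (hC : Maximal (circulant n (pairedD n a1 b1 ∪ pairedD n a2 b2)).IsClique C) :
    ((∀ i ∈ C, ∀ j ∈ C, i.val ≡ j.val [MOD a1]) →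
      C.ncard = b1 * b2 * Nat.gcd a2 (a1 * b1) / Nat.gcd (a1 * b1) (a2 * b2)) ∧
    ((∀ i ∈ C, ∀ j ∈ C, i.val ≡ j.val [MOD a2]) →
      C.ncard = b1 * b2 * Nat.gcd a1 (a2 * b2) / Nat.gcd (a1 * b1) (a2 * b2)) :=
  stmt_12_general n a1 b1 a2 b2 hn hlcm C hC
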